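/- arXiv:1004.0763 — 5 statements merged into one kernel-verified Lean document; each statement's English description precedes it below -/
import Mathlib

section
/- Let S_a and S_b be metric systems with Y_a = X_a, H_a = 1_{X_a}, Y_b = X_b, H_b = 1_{X_b}. Suppose S_b is deterministic and R ⊆ X_a × X_b is an ε-approximate alternating simulation relation from S_a to S_b such that R⁻¹ is an ε-approximate simulation relation from S_b to S_a. Then for every W ⊆ X_b and every (x_{a0}, x_{b0}) ∈ R: J̃(S*_{cd(a)}, F*_d, S_{d(a)}, ⌈W⌉_R, x_{a0}) ≤ J̃(S*_cb, F*_b, S_b, W, x_{b0}) ≤ J̃(S*_ca, F*_a, S_a, ⌊W⌋_R, x_{a0}), where (S*_cb, F*_b), (S*_ca, F*_a), and (S*_{cd(a)}, F*_d) are time-optimal controller pairs for the time-optimal reachability problems for (S_b, W), (S_a, ⌊W⌋_R), and (S_{d(a)}, ⌈W⌉_R) respectively, and S_{d(a)} is the deterministic system associated with S_a. -/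
/-- A system `S = (X, X₀, U, →, Y, H)`: initial states, transition relation, output map. -/
structure Sys (X U Y : Type*) where
  init : Set X
  tr : X → U → X → Prop
  out : X → Y

namespace Sys

variable {X U Y : Type*}

/-- `Post_u(x)`: the set of `u`-successors of `x`. -/
def Post (S : Sys X U Y) (u : U) (x : X) : Set X := {x' | S.tr x u x'}

/-- `U(x)`: the set of inputs enabled at `x`. -/
def enab (S : Sys X U Y) (x : X) : Set U := {u | (S.Post u x).Nonempty}

/-- A system is deterministic if every `Post_u(x)` has at most one element. -/
def Deterministic (S : Sys X U Y) : Prop :=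
  ∀ x u x₁ x₂, S.tr x u x₁ → S.tr x u x₂ → x₁ = x₂

/-- The deterministic system `S_{d(a)}` associated with `S`. -/
def detSys (S : Sys X U Y) : Sys X (U × X) Y where
  init := S.init
  tr x p x' := x' = p.2 ∧ S.tr x p.1 x'
  out := S.out

end Sys

open Sys

section Defs

variable {X U Y Xa Ua Xb Ub : Type*}

/-- `R(W)`, the image of a set under a relation. -/
def relImage (R : Set (Xa × Xb)) (W : Set Xa) : Set Xb :=
  {xb | ∃ xa ∈ W, (xa, xb) ∈ R}

/-- `⌊W⌋_R = {x_a | R(x_a) ⊆ W}`. -/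
def lowerApprox (R : Set (Xa × Xb)) (W : Set Xb) : Set Xa :=
  {xa | ∀ xb, (xa, xb) ∈ R → xb ∈ W}

/-- `⌈W⌉_R = {x_a | R(x_a) ∩ W ≠ ∅}`. -/
def upperApprox (R : Set (Xa × Xb)) (W : Set Xb) : Set Xa :=
  {xa | ∃ xb ∈ W, (xa, xb) ∈ R}

/-- `y 0, …, y n` is a finite behavior of `S` from `x`. -/
def IsFinBeh (S : Sys X U Y) (x : X) (n : ℕ) (y : ℕ → Y) : Prop :=
  ∃ xs : ℕ → X, xs 0 = x ∧ (∀ i ≤ n, S.out (xs i) = y i) ∧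
    ∀ i < n, ∃ u, S.tr (xs i) u (xs (i + 1))

/-- `y` is an infinite behavior of `S` from `x`. -/
def IsInfBeh (S : Sys X U Y) (x : X) (y : ℕ → Y) : Prop :=
  ∃ xs : ℕ → X, xs 0 = x ∧ (∀ i, S.out (xs i) = y i) ∧
    ∀ i, ∃ u, S.tr (xs i) u (xs (i + 1))

/-- `y 0, …, y n` is a maximal finite behavior from `x`: it is a behavior and not a
proper prefix of another (finite or infinite) behavior of `S` from `x`. -/
def IsMaxFinBeh (S : Sys X U Y) (x : X) (n : ℕ) (y : ℕ → Y) : Prop :=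
  IsFinBeh S x n y ∧
    (¬ ∃ m, n < m ∧ ∃ y' : ℕ → Y, IsFinBeh S x m y' ∧ ∀ i ≤ n, y' i = y i) ∧
    (¬ ∃ y' : ℕ → Y, IsInfBeh S x y' ∧ ∀ i ≤ n, y' i = y i)

/-- Every maximal behavior of `S` from `x0` enters `W` within `k` steps. -/
def HitsWithin (S : Sys X U Y) (W : Set Y) (x0 : X) (k : ℕ) : Prop :=
  (∀ n y, IsMaxFinBeh S x0 n y → ∃ k' ≤ k, k' ≤ n ∧ y k' ∈ W) ∧
  (∀ y, IsInfBeh S x0 y → ∃ k' ≤ k, y k' ∈ W)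

/-- The entry time `J(S, W, x0) ∈ ℕ∞`: the minimum `k` such that every maximal behavior
from `x0` enters `W` within `k` steps (`⊤ = ∞` if no such `k` exists). -/
noncomputable def entryTime (S : Sys X U Y) (W : Set Y) (x0 : X) : ℕ∞ :=
  sInf {k : ℕ∞ | ∃ k0 : ℕ, k = (k0 : ℕ∞) ∧ HitsWithin S W x0 k0}

/-- Every maximal behavior of `S` from `x0` enters `W` (not necessarily uniformly). -/
def Enters (S : Sys X U Y) (W : Set Y) (x0 : X) : Prop :=
  (∀ n y, IsMaxFinBeh S x0 n y → ∃ k ≤ n, y k ∈ W) ∧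
  (∀ y, IsInfBeh S x0 y → ∃ k, y k ∈ W)

/-- The reachability operator `G_W(Z) = {x | x ∈ W ∨ ∃ u, ∅ ≠ Post_u(x) ⊆ Z}`. -/
def GW (S : Sys X U Y) (W : Set X) (Z : Set X) : Set X :=
  {x | x ∈ W ∨ ∃ u ∈ S.enab x, S.Post u x ⊆ Z}

end Defs

section Metric

variable {Xa Ua Xb Ub Y : Type*} [MetricSpace Y]

/-- `R` is an ε-approximate simulation relation from `Sa` to `Sb`. -/
def ApproxSim (Sa : Sys Xa Ua Y) (Sb : Sys Xb Ub Y) (ε : ℝ) (R : Set (Xa × Xb)) : Prop :=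
  (∀ xa0 ∈ Sa.init, ∃ xb0 ∈ Sb.init, (xa0, xb0) ∈ R) ∧
  (∀ p ∈ R, dist (Sa.out p.1) (Sb.out p.2) ≤ ε) ∧
  (∀ p ∈ R, ∀ (ua : Ua) (xa' : Xa), Sa.tr p.1 ua xa' →
    ∃ (ub : Ub) (xb' : Xb), Sb.tr p.2 ub xb' ∧ (xa', xb') ∈ R)

/-- `R` is an ε-approximate alternating simulation relation from `Sa` to `Sb`. -/
def ApproxAltSim (Sa : Sys Xa Ua Y) (Sb : Sys Xb Ub Y) (ε : ℝ) (R : Set (Xa × Xb)) : Prop :=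
  (∀ xa0 ∈ Sa.init, ∃ xb0 ∈ Sb.init, (xa0, xb0) ∈ R) ∧
  (∀ p ∈ R, dist (Sa.out p.1) (Sb.out p.2) ≤ ε) ∧
  (∀ p ∈ R, ∀ ua ∈ Sa.enab p.1, ∃ ub ∈ Sb.enab p.2,
    ∀ xb' ∈ Sb.Post ub p.2, ∃ xa' ∈ Sa.Post ua p.1, (xa', xb') ∈ R)

end Metric

section Comp

variable {Xc Uc Xa Ua Y : Type*} [NormedAddCommGroup Y] [NormedSpace ℝ Y]

/-- Membership `(x_c, x_a, u_c, u_a) ∈ R^e` in the extension of an alternating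
simulation relation `R` from a controller `Sc` to a plant `Sa`. -/
def extRel (Sc : Sys Xc Uc Y) (Sa : Sys Xa Ua Y) (R : Set (Xc × Xa))
    (xc : Xc) (xa : Xa) (uc : Uc) (ua : Ua) : Prop :=
  (xc, xa) ∈ R ∧ uc ∈ Sc.enab xc ∧ ua ∈ Sa.enab xa ∧
    ∀ xa' ∈ Sa.Post ua xa, ∃ xc' ∈ Sc.Post uc xc, (xc', xa') ∈ R

/-- The feedback composition `Sc ×_F Sa` with interconnection relation `F = R^e`.
Its states are the pairs in `R` (transitions are restricted to `R`), and its output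
map is `H_F(x_c, x_a) = ½ (H_c(x_c) + H_a(x_a))`. -/
noncomputable def Fcomp (Sc : Sys Xc Uc Y) (Sa : Sys Xa Ua Y) (R : Set (Xc × Xa)) :
    Sys (Xc × Xa) (Uc × Ua) Y where
  init := {p | p ∈ R ∧ p.1 ∈ Sc.init ∧ p.2 ∈ Sa.init}
  tr p u p' := Sc.tr p.1 u.1 p'.1 ∧ Sa.tr p.2 u.2 p'.2 ∧
    extRel Sc Sa R p.1 p.2 u.1 u.2 ∧ p' ∈ R
  out p := (2 : ℝ)⁻¹ • (Sc.out p.1 + Sa.out p.2)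

/-- `J̃(Sc, F, Sa, W, x_{a0})`: the minimum over initial controller states `x_{c0}`
with `(x_{c0}, x_{a0}) ∈ X_{F0}` of the entry time of `Sc ×_F Sa` into `W`. -/
noncomputable def Jt (Sc : Sys Xc Uc Y) (Sa : Sys Xa Ua Y) (R : Set (Xc × Xa))
    (W : Set Y) (xa0 : Xa) : ℕ∞ :=
  ⨅ xc0 ∈ {xc0 : Xc | (xc0, xa0) ∈ (Fcomp Sc Sa R).init},
    entryTime (Fcomp Sc Sa R) W (xc0, xa0)

/-- The controller pair `(Sc, R^e)` solves the reachability problem for `(Sa, W)`: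
`R` is an exact alternating simulation relation from `Sc` to `Sa` and some initial
state of the composition enters `W` along every maximal behavior. -/
def SolvesReach (Sc : Sys Xc Uc Y) (Sa : Sys Xa Ua Y) (R : Set (Xc × Xa))
    (W : Set Y) : Prop :=
  ApproxAltSim Sc Sa 0 R ∧
    ∃ x0 ∈ (Fcomp Sc Sa R).init, Enters (Fcomp Sc Sa R) W x0

end Comp

universe u v

/-- `(Sc, R^e)` is a time-optimal controller pair for `(Sa, W)`. -/
def TimeOpt {Xc Uc Xa Ua Y : Type*} [NormedAddCommGroup Y] [NormedSpace ℝ Y]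
    (Sc : Sys Xc Uc Y) (Sa : Sys Xa Ua Y) (R : Set (Xc × Xa)) (W : Set Y) : Prop :=
  SolvesReach Sc Sa R W ∧
    ∀ (Xc' : Type u) (Uc' : Type v) (Sc' : Sys Xc' Uc' Y) (R' : Set (Xc' × Xa)),
      SolvesReach Sc' Sa R' W →
        ∀ xa0 ∈ Sa.init, Jt Sc Sa R W xa0 ≤ Jt Sc' Sa R' W xa0


section MyAux

open Classical Function

variable {Y : Type*} [NormedAddCommGroup Y] [NormedSpace ℝ Y]

private lemma my_half_add (y : Y) : (2:ℝ)⁻¹ • (y + y) = y := by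
  rw [← two_smul ℝ y, smul_smul]
  norm_num

private lemma fcomp_out_pin {Xc Uc Up : Type*} (Sc : Sys Xc Uc Y) (P : Sys Y Up Y)
    (Rc : Set (Xc × Y)) (hout : P.out = id)
    (hsim : ApproxAltSim Sc P 0 Rc) {q : Xc × Y} (hq : q ∈ Rc) :
    (Fcomp Sc P Rc).out q = q.2 := by
  have h1 : Sc.out q.1 = q.2 := by
    have h2 := dist_le_zero.mp (hsim.2.1 q hq)
    rw [h2, hout]; rfl
  show (2:ℝ)⁻¹ • (Sc.out q.1 + P.out q.2) = q.2
  rw [h1, hout, id]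
  exact my_half_add q.2

private lemma run_mem_rel {Xc Uc Up : Type*} (Sc : Sys Xc Uc Y) (P : Sys Y Up Y)
    (Rc : Set (Xc × Y)) {x0 : Xc × Y} (h0 : x0 ∈ Rc) {xs : ℕ → Xc × Y} {n : ℕ}
    (hxs0 : xs 0 = x0) (htr : ∀ i < n, ∃ u, (Fcomp Sc P Rc).tr (xs i) u (xs (i+1))) :
    ∀ i ≤ n, xs i ∈ Rc := by
  intro i hi
  induction i with
  | zero => rw [hxs0]; exact h0
  | succ j ih =>
    obtain ⟨u, ht⟩ := htr j (Nat.lt_of_succ_le hi)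
    exact ht.2.2.2

private lemma enat_sInf_mem {S : Set ℕ∞} (h : S.Nonempty) : sInf S ∈ S := by
  by_cases hn : ∃ n : ℕ, (n : ℕ∞) ∈ S
  · obtain ⟨n, hn⟩ := hn
    have hT : {m : ℕ | (m : ℕ∞) ∈ S}.Nonempty := ⟨n, hn⟩
    have hmem : ((sInf {m : ℕ | (m : ℕ∞) ∈ S} : ℕ) : ℕ∞) ∈ S := Nat.sInf_mem hT
    have heq : sInf S = ((sInf {m : ℕ | (m : ℕ∞) ∈ S} : ℕ) : ℕ∞) := by
      refine le_antisymm (sInf_le hmem) (le_sInf ?_)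
      intro b hb
      induction b using WithTop.recTopCoe with
      | top => exact le_top
      | coe m => exact Nat.cast_le.mpr (Nat.sInf_le hb)
    rw [heq]; exact hmem
  · obtain ⟨b, hb⟩ := h
    have hbt : b = ⊤ := by
      induction b using WithTop.recTopCoe with
      | top => rfl
      | coe m => exact absurd ⟨m, hb⟩ hn
    have hst : sInf S = ⊤ := by
      refine le_antisymm le_top (le_sInf ?_)
      intro c hc
      induction c using WithTop.recTopCoe with
      | top => exact le_rfl
      | coe m => exact absurd ⟨m, hc⟩ hn
    rw [hst, ← hbt] at *; exact hb

private lemma jt_extract {Xc Uc Up : Type*} (Sc : Sys Xc Uc Y) (P : Sys Y Up Y)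
    (Rc : Set (Xc × Y)) (W : Set Y) (x : Y) (hne : Jt Sc P Rc W x ≠ ⊤) :
    ∃ xc0, (xc0, x) ∈ (Fcomp Sc P Rc).init ∧
      ∃ Nb : ℕ, (Nb : ℕ∞) ≤ Jt Sc P Rc W x ∧ HitsWithin (Fcomp Sc P Rc) W (xc0, x) Nb := by
  have him : Jt Sc P Rc W x =
      sInf ((fun xc0 => entryTime (Fcomp Sc P Rc) W (xc0, x)) ''
        {xc0 : Xc | (xc0, x) ∈ (Fcomp Sc P Rc).init}) := by
    rw [sInf_image]; rfl
  have hSne : {xc0 : Xc | (xc0, x) ∈ (Fcomp Sc P Rc).init}.Nonempty := by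
    by_contra he
    rw [Set.not_nonempty_iff_eq_empty] at he
    apply hne
    rw [him, he]
    simp
  obtain ⟨xc0, hxc0, heq⟩ := enat_sInf_mem (hSne.image _)
  rw [← him] at heq
  have hent : entryTime (Fcomp Sc P Rc) W (xc0, x) ≠ ⊤ := by rw [heq]; exact hne
  have hKne : {k : ℕ∞ | ∃ k0 : ℕ, k = (k0 : ℕ∞) ∧
      HitsWithin (Fcomp Sc P Rc) W (xc0, x) k0}.Nonempty := by
    by_contra he
    rw [Set.not_nonempty_iff_eq_empty] at he
    apply hent
    unfold entryTime
    rw [he]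
    simp
  obtain ⟨k0, hk0, hhw⟩ := enat_sInf_mem hKne
  refine ⟨xc0, hxc0, k0, ?_, hhw⟩
  rw [← heq, ← hk0]
  exact sInf_le (by exact ⟨k0, hk0, hhw⟩)

end MyAux
section MasterLem

open Classical Function

private lemma masterLem {α : Type*} (R'' : Set (α × α)) (Tr2 : α → α → Prop)
    (Rl : ℕ → (ℕ → α) → Prop) (p0 : α × α) (hp0 : p0 ∈ R'')
    (h0 : Rl 0 (fun _ => p0.1))
    (hstep : ∀ (n : ℕ) (p : ℕ → α × α), (∀ i ≤ n, p i ∈ R'') → Rl n (fun i => (p i).1) →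
      (∃ f', (∀ i ≤ n, f' i = (p i).1) ∧ Rl (n+1) f') →
      ∃ q : α × α, Rl (n+1) (Function.update (fun i => (p i).1) (n+1) q.1) ∧ q ∈ R'' ∧
        Tr2 (p n).2 q.2) :
    (∃ p : ℕ → α × α, p 0 = p0 ∧ (∀ i, p i ∈ R'') ∧ (∀ i, Tr2 (p i).2 (p (i+1)).2)) ∨
    (∃ n, ∃ p : ℕ → α × α, p 0 = p0 ∧ (∀ i ≤ n, p i ∈ R'') ∧
      (∀ i < n, Tr2 (p i).2 (p (i+1)).2) ∧
      Rl n (fun i => (p i).1) ∧ ¬∃ f', (∀ i ≤ n, f' i = (p i).1) ∧ Rl (n+1) f') := by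
  classical
  set Inv : ℕ × (ℕ → α × α) → Prop := fun θ =>
    θ.2 0 = p0 ∧ (∀ i ≤ θ.1, θ.2 i ∈ R'') ∧ (∀ i < θ.1, Tr2 (θ.2 i).2 (θ.2 (i+1)).2) ∧
      Rl θ.1 (fun i => (θ.2 i).1) with hInv
  set E : ℕ × (ℕ → α × α) → Prop := fun θ =>
    ∃ f', (∀ i ≤ θ.1, f' i = (θ.2 i).1) ∧ Rl (θ.1+1) f' with hE
  have hext : ∀ θ, Inv θ → E θ → ∃ θ', Inv θ' ∧ θ'.1 = θ.1 + 1 ∧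
      (∀ i ≤ θ.1, θ'.2 i = θ.2 i) := by
    intro θ hI hEθ
    obtain ⟨q, hq1, hq2, hq3⟩ := hstep θ.1 θ.2 hI.2.1 hI.2.2.2 hEθ
    refine ⟨(θ.1+1, Function.update θ.2 (θ.1+1) q), ⟨?_, ?_, ?_, ?_⟩, rfl, ?_⟩
    · show Function.update θ.2 (θ.1+1) q 0 = p0
      rw [Function.update_of_ne (by omega)]
      exact hI.1
    · intro i hi
      show Function.update θ.2 (θ.1+1) q i ∈ R''
      rcases Nat.lt_succ_iff_lt_or_eq.mp (Nat.lt_succ_of_le hi) with h | h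
      · rw [Function.update_of_ne (by omega)]
        exact hI.2.1 i (by omega)
      · rw [h, Function.update_self]
        exact hq2
    · intro i hi
      show Tr2 (Function.update θ.2 (θ.1+1) q i).2 (Function.update θ.2 (θ.1+1) q (i+1)).2
      rcases Nat.lt_succ_iff_lt_or_eq.mp hi with h | h
      · rw [Function.update_of_ne (by omega), Function.update_of_ne (by omega)]
        exact hI.2.2.1 i h
      · rw [h, Function.update_of_ne (by omega), Function.update_self]
        exact hq3
    · show Rl (θ.1+1) (fun i => (Function.update θ.2 (θ.1+1) q i).1)
      have heqf : (fun i => (Function.update θ.2 (θ.1+1) q i).1) =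
          Function.update (fun i => (θ.2 i).1) (θ.1+1) q.1 := by
        funext i
        by_cases h : i = θ.1 + 1
        · rw [h]; simp
        · rw [Function.update_of_ne h, Function.update_of_ne h]
      rw [heqf]
      exact hq1
    · intro i hi
      exact Function.update_of_ne (by omega) _ _
  have hInv0 : Inv (0, fun _ => p0) := by
    refine ⟨rfl, fun i _ => hp0, fun i hi => absurd hi (by omega), h0⟩
  let g : {θ // Inv θ} → {θ // Inv θ} := fun σ =>
    if h : E σ.1 then ⟨choose (hext σ.1 σ.2 h), (choose_spec (hext σ.1 σ.2 h)).1⟩ else σ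
  let s : ℕ → {θ // Inv θ} := fun n => g^[n] ⟨(0, fun _ => p0), hInv0⟩
  have hsucc : ∀ n, s (n+1) = g (s n) := fun n => Function.iterate_succ_apply' g n _
  by_cases hEall : ∀ n, E (s n).1
  · left
    have hg : ∀ σ : {θ // Inv θ}, ∀ hσ : E σ.1, (g σ).1.1 = σ.1.1 + 1 ∧
        ∀ i ≤ σ.1.1, (g σ).1.2 i = σ.1.2 i := by
      intro σ hσ
      have hgσ : g σ = ⟨choose (hext σ.1 σ.2 hσ), (choose_spec (hext σ.1 σ.2 hσ)).1⟩ := by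
        show dite _ _ _ = _
        rw [dif_pos hσ]
      rw [hgσ]
      exact ⟨(choose_spec (hext σ.1 σ.2 hσ)).2.1, (choose_spec (hext σ.1 σ.2 hσ)).2.2⟩
    have hstep' : ∀ n, (s (n+1)).1.1 = (s n).1.1 + 1 ∧
        (∀ i ≤ (s n).1.1, (s (n+1)).1.2 i = (s n).1.2 i) := by
      intro n
      rw [hsucc n]
      exact hg (s n) (hEall n)
    have hk : ∀ n, (s n).1.1 = n := by
      intro n
      induction n with
      | zero => rfl
      | succ m ih => rw [(hstep' m).1, ih]
    refine ⟨fun i => (s i).1.2 i, ?_, ?_, ?_⟩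
    · exact (s 0).2.1
    · intro i
      exact (s i).2.2.1 i (le_of_eq (hk i).symm)
    · intro i
      have h2 := (s (i+1)).2.2.2.1 i (by rw [hk (i+1)]; omega)
      have h3 := (hstep' i).2 i (le_of_eq (hk i).symm)
      rw [h3] at h2
      exact h2
  · right
    push_neg at hEall
    obtain ⟨n, hn⟩ := hEall
    exact ⟨(s n).1.1, (s n).1.2, (s n).2.1, (s n).2.2.1, (s n).2.2.2.1, (s n).2.2.2.2, hn⟩

end MasterLem
section LemB

open Classical Function

variable {Y : Type*} [NormedAddCommGroup Y] [NormedSpace ℝ Y]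

private lemma lemB.{u', v'} {Up : Type*} (P : Sys Y Up Y) (hout : P.out = id) (W : Set Y)
    (L : ℕ) (xp : ℕ → Y) (up : ∀ i, i < L → Up) (h0 : xp 0 ∈ P.init)
    (htr : ∀ i (h : i < L), P.tr (xp i) (up i h) (xp (i+1)))
    (hdet : ∀ i (h : i < L) (x' : Y), P.tr (xp i) (up i h) x' → x' = xp (i+1))
    (hit : xp L ∈ W) :
    ∃ (C : Sys (ULift.{u'} (ℕ × ℕ)) PUnit.{v'+1} Y) (RC : Set (ULift.{u'} (ℕ × ℕ) × Y)),
      SolvesReach C P RC W ∧ Jt C P RC W (xp 0) ≤ (L : ℕ∞) := by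
  classical
  set C : Sys (ULift.{u'} (ℕ × ℕ)) PUnit.{v'+1} Y :=
    { init := {⟨(0,0)⟩},
      tr := fun c _ c' => c'.down.2 = c.down.2 + 1 ∧ c.down.2 < L,
      out := fun c => xp c.down.2 } with hC
  set RC : Set (ULift.{u'} (ℕ × ℕ) × Y) :=
    {q | q.1.down.2 ≤ L ∧ q.2 = xp q.1.down.2} with hRC
  set LB := Fcomp C P RC with hLB
  -- output of the loop
  have houtq : ∀ q ∈ RC, LB.out q = xp q.1.down.2 := by
    intro q hq
    show (2:ℝ)⁻¹ • (C.out q.1 + P.out q.2) = xp q.1.down.2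
    rw [hout, hq.2]
    show (2:ℝ)⁻¹ • (xp q.1.down.2 + xp q.1.down.2) = xp q.1.down.2
    exact my_half_add _
  -- canonical run
  set ρ : ℕ → (ULift.{u'} (ℕ × ℕ) × Y) := fun i => (⟨(0, i)⟩, xp i) with hρ
  have htrρ : ∀ i (h : i < L), LB.tr (ρ i) (PUnit.unit, up i h) (ρ (i+1)) := by
    intro i h
    simp only [hρ, hLB, hRC, hC]
    refine ⟨⟨rfl, h⟩, htr i h, ?_, ⟨Nat.succ_le_of_lt h, rfl⟩⟩
    refine ⟨⟨Nat.le_of_lt h, rfl⟩, ⟨⟨(0, i+1)⟩, rfl, h⟩, ⟨xp (i+1), htr i h⟩, ?_⟩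
    intro x' hx'
    refine ⟨⟨(0, i+1)⟩, ⟨rfl, h⟩, Nat.succ_le_of_lt h, ?_⟩
    exact hdet i h x' hx'
  -- forced runs
  have hforced : ∀ (xs : ℕ → ULift.{u'} (ℕ × ℕ) × Y) (n : ℕ),
      xs 0 = (⟨(0,0)⟩, xp 0) → (∀ i < n, ∃ u, LB.tr (xs i) u (xs (i+1))) →
      ∀ i ≤ n, (xs i).1.down.2 = i ∧ (xs i).2 = xp i ∧ i ≤ L := by
    intro xs n hxs0 htrs i hi
    induction i with
    | zero => rw [hxs0]; exact ⟨rfl, rfl, Nat.zero_le _⟩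
    | succ j ih =>
      obtain ⟨hj1, hj2, hj3⟩ := ih (le_trans (Nat.le_succ j) hi)
      obtain ⟨u, ht⟩ := htrs j (Nat.lt_of_succ_le hi)
      have hc := ht.1
      have hmem := ht.2.2.2
      have hjL : j < L := by rw [← hj1]; exact hc.2
      have hpos : (xs (j+1)).1.down.2 = j + 1 := by rw [hc.1, hj1]
      refine ⟨hpos, ?_, Nat.succ_le_of_lt hjL⟩
      rw [hmem.2, hpos]
  -- HitsWithin
  have hHW : HitsWithin LB W (⟨(0,0)⟩, xp 0) L ∧
      Enters LB W (⟨(0,0)⟩, xp 0) := by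
    have hcl1 : ∀ (n : ℕ) (y : ℕ → Y), IsMaxFinBeh LB (⟨(0,0)⟩, xp 0) n y →
        n = L ∧ ∀ i ≤ n, y i = xp i := by
      intro n y hmax
      obtain ⟨⟨xs, hxs0, hys, htrs⟩, hnofin, _⟩ := hmax
      have hf := hforced xs n hxs0 htrs
      have hyi : ∀ i ≤ n, y i = xp i := by
        intro i hi
        obtain ⟨h1, h2, h3⟩ := hf i hi
        have hmem : xs i ∈ RC := ⟨by rw [h1]; exact h3, by rw [h1, h2]⟩
        rw [← hys i hi, houtq (xs i) hmem, h1]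
      have hnL : n ≤ L := (hf n le_rfl).2.2
      rcases eq_or_lt_of_le hnL with h | h
      · exact ⟨h, hyi⟩
      · exfalso
        apply hnofin
        refine ⟨n+1, Nat.lt_succ_self n, fun i => xp i, ⟨ρ, rfl, ?_, ?_⟩, ?_⟩
        · intro i hi
          have hmem : ρ i ∈ RC := by
            simp only [hρ, hRC]
            exact ⟨le_trans hi h, rfl⟩
          rw [houtq (ρ i) hmem]
        · intro i hi
          exact ⟨(PUnit.unit, up i (lt_of_lt_of_le hi h)), htrρ i (lt_of_lt_of_le hi h)⟩
        · intro i hi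
          exact (hyi i hi).symm
    have hnoinf : ∀ (y : ℕ → Y), ¬ IsInfBeh LB (⟨(0,0)⟩, xp 0) y := by
      rintro y ⟨xs, hxs0, hys, htrs⟩
      have hf := hforced xs (L+1) hxs0 (fun i _ => htrs i)
      obtain ⟨u, ht⟩ := htrs L
      have := ht.1.2
      rw [(hf L (Nat.le_succ L)).1] at this
      exact lt_irrefl L this
    constructor
    · constructor
      · intro n y hmax
        obtain ⟨hnL, hyi⟩ := hcl1 n y hmax
        exact ⟨L, le_rfl, le_of_eq hnL.symm, by rw [hyi L (le_of_eq hnL.symm)]; exact hit⟩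
      · intro y hy
        exact absurd hy (hnoinf y)
    · constructor
      · intro n y hmax
        obtain ⟨hnL, hyi⟩ := hcl1 n y hmax
        exact ⟨n, le_rfl, by rw [hyi n le_rfl, hnL]; exact hit⟩
      · intro y hy
        exact absurd hy (hnoinf y)
  -- alternating simulation
  have haltsim : ApproxAltSim C P 0 RC := by
    refine ⟨?_, ?_, ?_⟩
    · intro xc0 hxc0
      have : xc0 = ⟨(0,0)⟩ := hxc0
      exact ⟨xp 0, h0, by rw [this]; exact ⟨Nat.zero_le _, rfl⟩⟩
    · intro q hq
      show dist (xp q.1.down.2) (P.out q.2) ≤ 0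
      rw [hout, hq.2]
      simp
    · intro q hq uc huc
      obtain ⟨c', hc'⟩ := huc
      have hkL : q.1.down.2 < L := hc'.2
      refine ⟨up q.1.down.2 hkL, ⟨xp (q.1.down.2 + 1), by rw [hq.2]; exact htr _ hkL⟩, ?_⟩
      intro xb' hxb'
      have hxb'eq : xb' = xp (q.1.down.2 + 1) := by
        apply hdet _ hkL
        rw [← hq.2]
        exact hxb'
      refine ⟨c', hc', ?_, ?_⟩
      · rw [hc'.1]; exact Nat.succ_le_of_lt hkL
      · rw [hc'.1]; exact hxb'eq
  have hinit : ((⟨(0,0)⟩ : ULift.{u'} (ℕ × ℕ)), xp 0) ∈ LB.init :=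
    ⟨⟨Nat.zero_le _, rfl⟩, rfl, h0⟩
  refine ⟨C, RC, ⟨haltsim, (⟨(0,0)⟩, xp 0), hinit, hHW.2⟩, ?_⟩
  calc Jt C P RC W (xp 0) ≤ entryTime LB W (⟨(0,0)⟩, xp 0) := by
        refine iInf_le_of_le ⟨(0,0)⟩ (iInf_le_of_le hinit le_rfl)
    _ ≤ (L : ℕ∞) := sInf_le ⟨L, rfl, hHW.1⟩

end LemB
section LemA

open Classical Function

variable {Y : Type*} [NormedAddCommGroup Y] [NormedSpace ℝ Y]

private lemma lemA.{u', v'} {Up : Type*} (P : Sys Y Up Y) (hout : P.out = id) (W : Set Y)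
    (xp : ℕ → Y) (up : ℕ → Up) (h0 : xp 0 ∈ P.init)
    (htr : ∀ i, P.tr (xp i) (up i) (xp (i+1)))
    (hdet : ∀ i (x' : Y), P.tr (xp i) (up i) x' → x' = xp (i+1)) :
    ∃ (C : Sys (ULift.{u'} (ℕ × ℕ)) PUnit.{v'+1} Y) (RC : Set (ULift.{u'} (ℕ × ℕ) × Y)),
      SolvesReach C P RC W ∧ Jt C P RC W (xp 0) ≤ (0 : ℕ∞) := by
  classical
  set C : Sys (ULift.{u'} (ℕ × ℕ)) PUnit.{v'+1} Y :=
    { init := {⟨(0,0)⟩},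
      tr := fun c _ c' => c'.down.2 = c.down.2 + 1 ∧ c'.down.2 ≤ c'.down.1 ∧
        (c.down.2 = 0 ∨ c'.down.1 = c.down.1),
      out := fun c => xp c.down.2 } with hC
  set RC : Set (ULift.{u'} (ℕ × ℕ) × Y) := {q | q.2 = xp q.1.down.2} with hRC
  set LB := Fcomp C P RC with hLB
  have houtq : ∀ q ∈ RC, LB.out q = xp q.1.down.2 := by
    intro q hq
    show (2:ℝ)⁻¹ • (C.out q.1 + P.out q.2) = xp q.1.down.2
    rw [hout, hq]
    show (2:ℝ)⁻¹ • (xp q.1.down.2 + xp q.1.down.2) = xp q.1.down.2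
    exact my_half_add _
  -- canonical run of branch m
  have htrρ : ∀ (m : ℕ) (ρ : ℕ → ULift.{u'} (ℕ × ℕ) × Y),
      (ρ = fun i => (⟨(if i = 0 then 0 else m, i)⟩, xp i)) →
      ∀ i, i < m → LB.tr (ρ i) (PUnit.unit, up i) (ρ (i+1)) := by
    intro m ρ hρ i him
    have h1m : 1 ≤ m := Nat.one_le_iff_ne_zero.mpr (by omega)
    subst hρ
    have hctr : C.tr ⟨(if i = 0 then 0 else m, i)⟩ PUnit.unit ⟨(if i + 1 = 0 then 0 else m, i+1)⟩ := by
      refine ⟨by simp, ?_, ?_⟩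
      · simp only [Nat.succ_ne_zero, if_false]
        omega
      · by_cases h : i = 0
        · left; simp [h]
        · right; simp [h]
    refine ⟨hctr, htr i, ?_, rfl⟩
    refine ⟨rfl, ⟨_, hctr⟩, ⟨xp (i+1), htr i⟩, ?_⟩
    intro x' hx'
    refine ⟨⟨(if i + 1 = 0 then 0 else m, i+1)⟩, hctr, ?_⟩
    show x' = xp (i+1)
    exact hdet i x' hx'
  -- forced runs: position increments, outputs pinned, branch constant after step 1
  have hforced : ∀ (xs : ℕ → ULift.{u'} (ℕ × ℕ) × Y) (n : ℕ),
      xs 0 = (⟨(0,0)⟩, xp 0) → (∀ i < n, ∃ u, LB.tr (xs i) u (xs (i+1))) →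
      ∀ i ≤ n, (xs i).1.down.2 = i ∧ (xs i).2 = xp i ∧
        (1 ≤ i → i ≤ (xs i).1.down.1 ∧ (xs i).1.down.1 = (xs 1).1.down.1) := by
    intro xs n hxs0 htrs i hi
    induction i with
    | zero => rw [hxs0]; exact ⟨rfl, rfl, by omega⟩
    | succ j ih =>
      obtain ⟨hj1, hj2, hj3⟩ := ih (le_trans (Nat.le_succ j) hi)
      obtain ⟨u, ht⟩ := htrs j (Nat.lt_of_succ_le hi)
      have hc := ht.1
      have hmem := ht.2.2.2
      have hpos : (xs (j+1)).1.down.2 = j + 1 := by rw [hc.1, hj1]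
      have hout2 : (xs (j+1)).2 = xp (j+1) := by
        have := hmem
        rw [hRC] at this
        rw [this, hpos]
      refine ⟨hpos, hout2, ?_⟩
      intro _
      constructor
      · have h21 := hc.2.1
        rw [hpos] at h21
        exact h21
      · rcases hc.2.2 with h | h
        · -- j = 0 case: then j+1 = 1
          rw [hj1] at h
          have hj0 : j = 0 := h
          rw [hj0]
        · -- branch constant
          rcases Nat.eq_zero_or_pos j with hj0 | hj0
          · rw [hj0]
          · rw [h, (hj3 hj0).2]
  -- no infinite runs
  have hnoinf : ∀ (y : ℕ → Y), ¬ IsInfBeh LB (⟨(0,0)⟩, xp 0) y := by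
    rintro y ⟨xs, hxs0, hys, htrs⟩
    set b := (xs 1).1.down.1 with hb
    have hf : ∀ i, (xs i).1.down.2 = i ∧ (xs i).2 = xp i ∧
        (1 ≤ i → i ≤ (xs i).1.down.1 ∧ (xs i).1.down.1 = b) :=
      fun i => hforced xs (i+1) hxs0 (fun j _ => htrs j) i (Nat.le_succ i)
    have := (hf (b+1)).2.2 (by omega)
    omega
  -- no maximal finite behaviors
  have hnomax : ∀ (n : ℕ) (y : ℕ → Y), ¬ IsMaxFinBeh LB (⟨(0,0)⟩, xp 0) n y := by
    intro n y hmax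
    obtain ⟨⟨xs, hxs0, hys, htrs⟩, hnofin, _⟩ := hmax
    have hf := hforced xs n hxs0 htrs
    have hyi : ∀ i ≤ n, y i = xp i := by
      intro i hi
      obtain ⟨h1, h2, _⟩ := hf i hi
      have hmem : xs i ∈ RC := by rw [hRC]; show (xs i).2 = _; rw [h1, h2]
      rw [← hys i hi, houtq (xs i) hmem, h1]
    apply hnofin
    set ρ : ℕ → ULift.{u'} (ℕ × ℕ) × Y := fun i => (⟨(if i = 0 then 0 else n+1, i)⟩, xp i) with hρ
    refine ⟨n+1, Nat.lt_succ_self n, fun i => xp i, ⟨ρ, by simp [hρ], ?_, ?_⟩, ?_⟩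
    · intro i hi
      have hmem : ρ i ∈ RC := by rw [hρ, hRC]; rfl
      rw [houtq (ρ i) hmem]
    · intro i hi
      exact ⟨(PUnit.unit, up i), htrρ (n+1) ρ hρ i (by omega)⟩
    · intro i hi
      exact (hyi i hi).symm
  -- alternating simulation
  have haltsim : ApproxAltSim C P 0 RC := by
    refine ⟨?_, ?_, ?_⟩
    · intro xc0 hxc0
      have : xc0 = ⟨(0,0)⟩ := hxc0
      exact ⟨xp 0, h0, by rw [this, hRC]; rfl⟩
    · intro q hq
      show dist (xp q.1.down.2) (P.out q.2) ≤ 0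
      rw [hout, hq]
      simp
    · intro q hq uc huc
      obtain ⟨c', hc'⟩ := huc
      refine ⟨up q.1.down.2, ⟨xp (q.1.down.2 + 1), by rw [hq]; exact htr _⟩, ?_⟩
      intro xb' hxb'
      have hxb'eq : xb' = xp (q.1.down.2 + 1) := by
        apply hdet
        rw [← hq]
        exact hxb'
      refine ⟨c', hc', ?_⟩
      show xb' = xp c'.down.2
      rw [hc'.1]
      exact hxb'eq
  have hinit : ((⟨(0,0)⟩ : ULift.{u'} (ℕ × ℕ)), xp 0) ∈ LB.init := ⟨by rw [hRC]; rfl, rfl, h0⟩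
  have hHW : HitsWithin LB W (⟨(0,0)⟩, xp 0) 0 :=
    ⟨fun n y hmax => absurd hmax (hnomax n y), fun y hy => absurd hy (hnoinf y)⟩
  have hent : Enters LB W (⟨(0,0)⟩, xp 0) :=
    ⟨fun n y hmax => absurd hmax (hnomax n y), fun y hy => absurd hy (hnoinf y)⟩
  refine ⟨C, RC, ⟨haltsim, (⟨(0,0)⟩, xp 0), hinit, hent⟩, ?_⟩
  calc Jt C P RC W (xp 0) ≤ entryTime LB W (⟨(0,0)⟩, xp 0) := by
        refine iInf_le_of_le ⟨(0,0)⟩ (iInf_le_of_le hinit le_rfl)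
    _ ≤ ((0:ℕ) : ℕ∞) := sInf_le ⟨0, rfl, hHW⟩
    _ = (0 : ℕ∞) := by norm_num

end LemA
section CoreLem

open Classical Function

variable {Y : Type*} [NormedAddCommGroup Y] [NormedSpace ℝ Y]

/-- Realizability of an output history in the closed loop `Fcomp Sc1 P1 R1` from `x0`. -/
private def RealP {Xc1 Uc1 Up1 : Type*} (Sc1 : Sys Xc1 Uc1 Y) (P1 : Sys Y Up1 Y)
    (R1 : Set (Xc1 × Y)) (x0 : Xc1 × Y) (n : ℕ) (f : ℕ → Y) : Prop :=
  ∃ xs : ℕ → Xc1 × Y, xs 0 = x0 ∧ (∀ i ≤ n, (xs i).2 = f i) ∧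
    ∀ i < n, ∃ u, (Fcomp Sc1 P1 R1).tr (xs i) u (xs (i+1))

private lemma coreLem.{u', v'} {Xc1 Uc1 Up1 Up2 : Type*}
    (Sc1 : Sys Xc1 Uc1 Y) (P1 : Sys Y Up1 Y) (R1 : Set (Xc1 × Y)) (W1 : Set Y)
    (P2 : Sys Y Up2 Y) (W2 : Set Y) (hout1 : P1.out = id) (hout2 : P2.out = id)
    (halt1 : ApproxAltSim Sc1 P1 0 R1)
    (R'' : Set (Y × Y)) (x0 : Xc1 × Y) (hx0R : x0 ∈ R1)
    (p0 : Y × Y) (hx0p : x0.2 = p0.1) (hp0 : p0 ∈ R'') (hp02 : p0.2 ∈ P2.init)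
    (Nb : ℕ) (hHW : HitsWithin (Fcomp Sc1 P1 R1) W1 x0 Nb)
    (htrans : ∀ q ∈ R'', q.1 ∈ W1 → q.2 ∈ W2)
    (htr2det : ∀ a a', (∃ u : Up2, P2.tr a u a') →
      ∃ u2 : Up2, P2.tr a u2 a' ∧ ∀ x', P2.tr a u2 x' → x' = a')
    (hstep : ∀ (n : ℕ) (p : ℕ → Y × Y), (∀ i ≤ n, p i ∈ R'') →
      RealP Sc1 P1 R1 x0 n (fun i => (p i).1) →
      (∃ f', (∀ i ≤ n, f' i = (p i).1) ∧ RealP Sc1 P1 R1 x0 (n+1) f') →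
      ∃ q : Y × Y, RealP Sc1 P1 R1 x0 (n+1) (Function.update (fun i => (p i).1) (n+1) q.1) ∧
        q ∈ R'' ∧ (∃ u : Up2, P2.tr (p n).2 u q.2)) :
    ∃ (C : Sys (ULift.{u'} (ℕ × ℕ)) PUnit.{v'+1} Y) (RC : Set (ULift.{u'} (ℕ × ℕ) × Y)),
      SolvesReach C P2 RC W2 ∧ Jt C P2 RC W2 p0.2 ≤ (Nb : ℕ∞) := by
  classical
  have h0 : RealP Sc1 P1 R1 x0 0 (fun _ => p0.1) :=
    ⟨fun _ => x0, rfl, fun i hi => by rw [Nat.le_zero.mp hi]; exact hx0p,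
      fun i hi => absurd hi (by omega)⟩
  rcases masterLem R'' (fun a a' => ∃ u : Up2, P2.tr a u a') (RealP Sc1 P1 R1 x0) p0 hp0 h0
    hstep with ⟨p, hP0, hpairs, htr2⟩ | ⟨n, p, hP0, hpairs, htr2, hReal, hnE⟩
  · -- infinite case: use lemA
    have hTr : ∀ i, ∃ u2 : Up2, P2.tr ((p i).2) u2 ((p (i+1)).2) ∧
        ∀ x', P2.tr ((p i).2) u2 x' → x' = (p (i+1)).2 :=
      fun i => htr2det _ _ (htr2 i)
    have hinit2 : (p 0).2 ∈ P2.init := by rw [hP0]; exact hp02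
    obtain ⟨C, RC, hs, hj⟩ := lemA P2 hout2 W2 (fun i => (p i).2)
      (fun i => (hTr i).choose) hinit2
      (fun i => (hTr i).choose_spec.1) (fun i x' hx' => (hTr i).choose_spec.2 x' hx')
    refine ⟨C, RC, hs, ?_⟩
    simp only [hP0] at hj
    exact le_trans hj (by norm_num)
  · -- finite stuck case
    have hmax : IsMaxFinBeh (Fcomp Sc1 P1 R1) x0 n (fun i => (p i).1) := by
      obtain ⟨xs, h1, h2, h3⟩ := hReal
      have hmem : ∀ i ≤ n, xs i ∈ R1 := run_mem_rel Sc1 P1 R1 hx0R h1 h3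
      refine ⟨⟨xs, h1, ?_, h3⟩, ?_, ?_⟩
      · intro i hi
        rw [fcomp_out_pin Sc1 P1 R1 hout1 halt1 (hmem i hi)]
        exact h2 i hi
      · rintro ⟨m, hm, y', ⟨xs', h1', h2', h3'⟩, hag⟩
        apply hnE
        have hmem' : ∀ i ≤ m, xs' i ∈ R1 := run_mem_rel Sc1 P1 R1 hx0R h1' h3'
        refine ⟨fun i => (xs' i).2, ?_, xs', h1', fun i _ => rfl, ?_⟩
        · intro i hi
          have hh := h2' i (le_trans hi (le_of_lt hm))
          rw [fcomp_out_pin Sc1 P1 R1 hout1 halt1 (hmem' i (le_trans hi (le_of_lt hm)))] at hh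
          show (xs' i).2 = (p i).1
          rw [hh, hag i hi]
        · intro i hi
          exact h3' i (by omega)
      · rintro ⟨y', ⟨xs', h1', h2', h3'⟩, hag⟩
        apply hnE
        have hmem' : ∀ i, xs' i ∈ R1 :=
          fun i => run_mem_rel Sc1 P1 R1 hx0R h1' (fun j _ => h3' j) i le_rfl
        refine ⟨fun i => (xs' i).2, ?_, xs', h1', fun i _ => rfl, fun i _ => h3' i⟩
        intro i hi
        have hh := h2' i
        rw [fcomp_out_pin Sc1 P1 R1 hout1 halt1 (hmem' i)] at hh
        show (xs' i).2 = (p i).1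
        rw [hh, hag i hi]
    obtain ⟨k, hkN, hkn, hkW⟩ := hHW.1 n _ hmax
    have hW2 : (p k).2 ∈ W2 := htrans (p k) (hpairs k hkn) hkW
    have hTr : ∀ i, i < k → ∃ u2 : Up2, P2.tr ((p i).2) u2 ((p (i+1)).2) ∧
        ∀ x', P2.tr ((p i).2) u2 x' → x' = (p (i+1)).2 :=
      fun i hik => htr2det _ _ (htr2 i (lt_of_lt_of_le hik hkn))
    have hinit2 : (p 0).2 ∈ P2.init := by rw [hP0]; exact hp02
    obtain ⟨C, RC, hs, hj⟩ := lemB P2 hout2 W2 k (fun i => (p i).2)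
      (fun i h => (hTr i h).choose) hinit2
      (fun i h => (hTr i h).choose_spec.1) (fun i h x' hx' => (hTr i h).choose_spec.2 x' hx')
      hW2
    refine ⟨C, RC, hs, ?_⟩
    simp only [hP0] at hj
    exact le_trans hj (Nat.cast_le.mpr hkN)

end CoreLem

/-- Theorem: upper and lower bounds for the optimal entry time of `Sb`
computed on `Sa` and on its associated deterministic system `S_{d(a)}`. -/
theorem entryTime_bounds
    {Y : Type*} [NormedAddCommGroup Y] [NormedSpace ℝ Y]
    {Ua Ub Xca Uca Xcb Ucb Xcd Ucd : Type*}
    (Sa : Sys Y Ua Y) (Sb : Sys Y Ub Y)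
    (hHa : Sa.out = id) (hHb : Sb.out = id)
    (hdet : Sb.Deterministic)
    (eps : ℝ) (heps : 0 ≤ eps) (R : Set (Y × Y))
    (hAS : ApproxAltSim Sa Sb eps R)
    (hSim : ApproxSim Sb Sa eps {p : Y × Y | (p.2, p.1) ∈ R})
    (W : Set Y)
    (Scb : Sys Xcb Ucb Y) (Rb : Set (Xcb × Y))
    (hOptB : TimeOpt Scb Sb Rb W)
    (Sca : Sys Xca Uca Y) (Ra : Set (Xca × Y))
    (hOptA : TimeOpt Sca Sa Ra (lowerApprox R W))
    (Scd : Sys Xcd Ucd Y) (Rd : Set (Xcd × Y))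
    (hOptD : TimeOpt Scd Sa.detSys Rd (upperApprox R W)) :
    ∀ xa0 ∈ Sa.init, ∀ xb0 ∈ Sb.init, (xa0, xb0) ∈ R →
      Jt Scd Sa.detSys Rd (upperApprox R W) xa0 ≤ Jt Scb Sb Rb W xb0 ∧
      Jt Scb Sb Rb W xb0 ≤ Jt Sca Sa Ra (lowerApprox R W) xa0 := by
  classical
  intro xa0 hxa0 xb0 hxb0 hR0
  constructor
  · -- d-side ≤ b-side
    by_cases htop : Jt Scb Sb Rb W xb0 = ⊤
    · rw [htop]; exact le_top
    · obtain ⟨xcb0, hinitb, Nb, hNble, hHWb⟩ := jt_extract Scb Sb Rb W xb0 htop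
      have hstep1 : ∀ (n : ℕ) (p : ℕ → Y × Y),
          (∀ i ≤ n, p i ∈ {q : Y × Y | (q.2, q.1) ∈ R}) →
          RealP Scb Sb Rb (xcb0, xb0) n (fun i => (p i).1) →
          (∃ f', (∀ i ≤ n, f' i = (p i).1) ∧ RealP Scb Sb Rb (xcb0, xb0) (n+1) f') →
          ∃ q : Y × Y, RealP Scb Sb Rb (xcb0, xb0) (n+1)
              (Function.update (fun i => (p i).1) (n+1) q.1) ∧
            q ∈ {q : Y × Y | (q.2, q.1) ∈ R} ∧
            (∃ u : Ua × Y, Sa.detSys.tr (p n).2 u q.2) := by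
        intro n p hpair hreal hE
        obtain ⟨f', hfag, xs, hxs0, hout', htrs⟩ := hE
        obtain ⟨u, hu⟩ := htrs n (Nat.lt_succ_self n)
        obtain ⟨hSctr, hSbtr, hext, hmem⟩ := hu
        have hxsn : (xs n).2 = (p n).1 := by
          rw [hout' n (Nat.le_succ n), hfag n le_rfl]
        have hpr : ((p n).1, (p n).2) ∈ {q : Y × Y | (q.2, q.1) ∈ R} := hpair n le_rfl
        have hbt : Sb.tr (p n).1 u.2 ((xs (n+1)).2) := by rw [← hxsn]; exact hSbtr
        obtain ⟨ua, xa', hSa, hR'⟩ :=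
          hSim.2.2 ((p n).1, (p n).2) hpr u.2 ((xs (n+1)).2) hbt
        refine ⟨((xs (n+1)).2, xa'), ?_, hR', ⟨(ua, xa'), rfl, hSa⟩⟩
        refine ⟨xs, hxs0, ?_, htrs⟩
        intro i hi
        by_cases h : i = n + 1
        · rw [h, Function.update_self]
        · rw [Function.update_of_ne h]
          show (xs i).2 = (p i).1
          rw [hout' i hi, hfag i (by omega)]
      obtain ⟨C, RC, hsol, hjt⟩ := coreLem Scb Sb Rb W Sa.detSys (upperApprox R W)
        hHb hHa hOptB.1.1 {q : Y × Y | (q.2, q.1) ∈ R} (xcb0, xb0) hinitb.1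
        (xb0, xa0) rfl hR0 hxa0 Nb hHWb
        (fun q hq hW => ⟨q.1, hW, hq⟩)
        (by
          rintro a a' ⟨u, hu⟩
          exact ⟨u, hu, fun x' hx' => hx'.1.trans hu.1.symm⟩)
        hstep1
      calc Jt Scd Sa.detSys Rd (upperApprox R W) xa0
          ≤ Jt C Sa.detSys RC (upperApprox R W) xa0 := hOptD.2 _ _ C RC hsol xa0 hxa0
        _ ≤ (Nb : ℕ∞) := hjt
        _ ≤ Jt Scb Sb Rb W xb0 := hNble
  · -- b-side ≤ a-side
    by_cases htop : Jt Sca Sa Ra (lowerApprox R W) xa0 = ⊤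
    · rw [htop]; exact le_top
    · obtain ⟨xca0, hinita, Nb, hNble, hHWa⟩ :=
        jt_extract Sca Sa Ra (lowerApprox R W) xa0 htop
      have hstep2 : ∀ (n : ℕ) (p : ℕ → Y × Y),
          (∀ i ≤ n, p i ∈ R) →
          RealP Sca Sa Ra (xca0, xa0) n (fun i => (p i).1) →
          (∃ f', (∀ i ≤ n, f' i = (p i).1) ∧ RealP Sca Sa Ra (xca0, xa0) (n+1) f') →
          ∃ q : Y × Y, RealP Sca Sa Ra (xca0, xa0) (n+1)
              (Function.update (fun i => (p i).1) (n+1) q.1) ∧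
            q ∈ R ∧ (∃ u : Ub, Sb.tr (p n).2 u q.2) := by
        intro n p hpair hreal hE
        obtain ⟨f', hfag, xs, hxs0, hout', htrs⟩ := hE
        obtain ⟨u, hu⟩ := htrs n (Nat.lt_succ_self n)
        obtain ⟨hSctr, hSatr, hext, hmem⟩ := hu
        have hxsn : (xs n).2 = (p n).1 := by
          rw [hout' n (Nat.le_succ n), hfag n le_rfl]
        have hua : u.2 ∈ Sa.enab ((p n).1) :=
          ⟨(xs (n+1)).2, by rw [← hxsn]; exact hSatr⟩
        obtain ⟨ub, hub, hlift⟩ := hAS.2.2 (p n) (hpair n le_rfl) u.2 hua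
        obtain ⟨xb', hxb'⟩ := hub
        obtain ⟨xa', hxa'post, hxa'R⟩ := hlift xb' hxb'
        have hposteq : xa' ∈ Sa.Post u.2 ((xs n).2) := by rw [hxsn]; exact hxa'post
        obtain ⟨xc', hxc'post, hxc'R⟩ := hext.2.2.2 xa' hposteq
        refine ⟨(xa', xb'), ?_, hxa'R, ⟨ub, hxb'⟩⟩
        refine ⟨Function.update xs (n+1) (xc', xa'), ?_, ?_, ?_⟩
        · rw [Function.update_of_ne (by omega) _ _]
          exact hxs0
        · intro i hi
          by_cases h : i = n + 1
          · rw [h, Function.update_self, Function.update_self]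
          · rw [Function.update_of_ne h, Function.update_of_ne h]
            show (xs i).2 = (p i).1
            rw [hout' i hi, hfag i (by omega)]
        · intro i hi
          by_cases h : i = n
          · subst h
            rw [Function.update_of_ne (by omega) _ _, Function.update_self]
            exact ⟨u, hxc'post, hposteq, hext, hxc'R⟩
          · rw [Function.update_of_ne (by omega) _ _,
              Function.update_of_ne (by omega) _ _]
            exact htrs i (by omega)
      obtain ⟨C, RC, hsol, hjt⟩ := coreLem Sca Sa Ra (lowerApprox R W) Sb W
        hHa hHb hOptA.1.1 R (xca0, xa0) hinita.1
        (xa0, xb0) rfl hR0 hxb0 Nb hHWa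
        (fun q hq hl => hl q.2 hq)
        (by
          rintro a a' ⟨u, hu⟩
          exact ⟨u, hu, fun x' hx' => hdet a u x' a' hx' hu⟩)
        hstep2
      calc Jt Scb Sb Rb W xb0
          ≤ Jt C Sb RC W xb0 := hOptB.2 _ _ C RC hsol xb0 hxb0
        _ ≤ (Nb : ℕ∞) := hjt
        _ ≤ Jt Sca Sa Ra (lowerApprox R W) xa0 := hNble
end

section
/- Let R be an ε-approximate simulation relation from a metric system S_a to a metric system S_b (same output set) and let (x_a, x_b) ∈ R. Then for every finite behavior y^a = y^a_0 … y^a_n of S_a from x_a there exists a finite behavior y^b = y^b_0 … y^b_n of S_b from x_b of the same length with d(y^a_k, y^b_k) ≤ ε for all 0 ≤ k ≤ n, and for every infinite behavior y^a of S_a from x_a there exists an infinite behavior y^b of S_b from x_b with d(y^a(k), y^b(k)) ≤ ε for all k ∈ ℕ. -/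
open Sys

universe u v

open Classical in
noncomputable def buildSeq {Xa Xb Ub Y : Type*} (Sb : Sys Xb Ub Y) (R : Set (Xa × Xb))
    (xsa : ℕ → Xa) (xb : Xb) : ℕ → Xb
  | 0 => xb
  | (i+1) =>
    let b := buildSeq Sb R xsa xb i
    if h : ∃ p : Ub × Xb, Sb.tr b p.1 p.2 ∧ (xsa (i+1), p.2) ∈ R then h.choose.2 else b

lemma buildSeq_step {Xa Ua Xb Ub Y : Type*} [MetricSpace Y]
    (Sa : Sys Xa Ua Y) (Sb : Sys Xb Ub Y) (eps : ℝ) (R : Set (Xa × Xb))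
    (hSim : ApproxSim Sa Sb eps R) (xsa : ℕ → Xa) (xb : Xb) (i : ℕ)
    (hR : (xsa i, buildSeq Sb R xsa xb i) ∈ R)
    (htr : ∃ u, Sa.tr (xsa i) u (xsa (i+1))) :
    (xsa (i+1), buildSeq Sb R xsa xb (i+1)) ∈ R ∧
      ∃ u, Sb.tr (buildSeq Sb R xsa xb i) u (buildSeq Sb R xsa xb (i+1)) := by
  obtain ⟨u, hu⟩ := htr
  obtain ⟨ub, xb', hb, hR'⟩ := hSim.2.2 _ hR u _ hu
  have h : ∃ p : Ub × Xb, Sb.tr (buildSeq Sb R xsa xb i) p.1 p.2 ∧ (xsa (i+1), p.2) ∈ R :=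
    ⟨(ub, xb'), hb, hR'⟩
  have : buildSeq Sb R xsa xb (i+1) = h.choose.2 := by
    simp only [buildSeq, dif_pos h]
  rw [this]
  exact ⟨h.choose_spec.2, h.choose.1, h.choose_spec.1⟩

/-- an ε-approximate simulation relation matches every (finite or
infinite) behavior of `Sa` by a behavior of `Sb` of the same length, ε-close
pointwise. -/
theorem behavior_matching
    {Xa Ua Xb Ub Y : Type*} [MetricSpace Y]
    (Sa : Sys Xa Ua Y) (Sb : Sys Xb Ub Y) (eps : ℝ)
    (R : Set (Xa × Xb)) (hSim : ApproxSim Sa Sb eps R) :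
    ∀ xa xb, (xa, xb) ∈ R →
      (∀ (n : ℕ) (ya : ℕ → Y), IsFinBeh Sa xa n ya →
        ∃ yb : ℕ → Y, IsFinBeh Sb xb n yb ∧ ∀ k ≤ n, dist (ya k) (yb k) ≤ eps) ∧
      (∀ ya : ℕ → Y, IsInfBeh Sa xa ya →
        ∃ yb : ℕ → Y, IsInfBeh Sb xb yb ∧ ∀ k, dist (ya k) (yb k) ≤ eps) := by
  intro xa xb hR0
  constructor
  · intro n ya ⟨xsa, h0, hout, htr⟩
    set xsb := buildSeq Sb R xsa xb with hxsb
    have key : ∀ i ≤ n, (xsa i, xsb i) ∈ R := by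
      intro i hi
      induction i with
      | zero => simpa [hxsb, buildSeq, h0] using hR0
      | succ j ih =>
        exact (buildSeq_step Sa Sb eps R hSim xsa xb j
          (ih (Nat.le_of_succ_le hi)) (htr j hi)).1
    refine ⟨fun k => Sb.out (xsb k), ⟨xsb, by simp [hxsb, buildSeq], fun i _ => rfl, ?_⟩, ?_⟩
    · intro i hi
      exact (buildSeq_step Sa Sb eps R hSim xsa xb i
        (key i (le_of_lt hi)) (htr i hi)).2
    · intro k hk
      rw [← hout k hk]
      exact hSim.2.1 _ (key k hk)
  · intro ya ⟨xsa, h0, hout, htr⟩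
    set xsb := buildSeq Sb R xsa xb with hxsb
    have key : ∀ i, (xsa i, xsb i) ∈ R := by
      intro i
      induction i with
      | zero => simpa [hxsb, buildSeq, h0] using hR0
      | succ j ih =>
        exact (buildSeq_step Sa Sb eps R hSim xsa xb j ih (htr j)).1
    refine ⟨fun k => Sb.out (xsb k), ⟨xsb, by simp [hxsb, buildSeq], fun i => rfl, ?_⟩, ?_⟩
    · intro i
      exact (buildSeq_step Sa Sb eps R hSim xsa xb i (key i) (htr i)).2
    · intro k
      rw [← hout k]
      exact hSim.2.1 _ (key k)
end

section
/- Let S_c and S_b be metric systems whose common output set Y is a normed real vector space (with the metric induced by the norm), let R be an ε-approximate alternating simulation relation from S_c to S_b, and let F = R^e be the associated interconnection relation. Then the relation R_cb = {((x_c, x_b), x_c') ∈ X_F × X_c : x_c = x_c'} is an (ε/2)-approximate simulation relation from the feedback composition S_c ×^ε_F S_b to S_c; hence S_c ×^ε_F S_b ≼^{ε/2}_S S_c. -/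
open Sys

universe u v

/-- the feedback composition `S_c ×^ε_F S_b` is (ε/2)-approximately
simulated by the controller `S_c`, via
`R_cb = {((x_c, x_b), x_c') ∈ X_F × X_c | x_c = x_c'}` (recall `X_F = R`). -/
theorem fcomp_sim_controller
    {Xc Uc Xb Ub Y : Type*} [NormedAddCommGroup Y] [NormedSpace ℝ Y]
    (Sc : Sys Xc Uc Y) (Sb : Sys Xb Ub Y)
    (eps : ℝ) (heps : 0 ≤ eps)
    (R : Set (Xc × Xb)) (hAS : ApproxAltSim Sc Sb eps R) :
    ApproxSim (Fcomp Sc Sb R) Sc (eps / 2)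
      {p : (Xc × Xb) × Xc | p.1 ∈ R ∧ p.1.1 = p.2} := by
  obtain ⟨h1, h2, h3⟩ := hAS
  refine ⟨?_, ?_, ?_⟩
  · rintro ⟨xc, xb⟩ ⟨hR, hc, hb⟩
    exact ⟨xc, hc, hR, rfl⟩
  · rintro ⟨⟨xc, xb⟩, xc'⟩ ⟨hR, heq⟩
    simp only at heq
    subst heq
    have hd := h2 (xc, xb) hR
    simp only [Fcomp, dist_eq_norm] at *
    have key : (2 : ℝ)⁻¹ • (Sc.out xc + Sb.out xb) - Sc.out xc
        = (2 : ℝ)⁻¹ • (Sb.out xb - Sc.out xc) := by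
      module
    rw [key, norm_smul]
    have hle : ‖Sb.out xb - Sc.out xc‖ ≤ eps := by
      rwa [norm_sub_rev]
    calc ‖(2:ℝ)⁻¹‖ * ‖Sb.out xb - Sc.out xc‖ ≤ (2:ℝ)⁻¹ * eps := by
          rw [Real.norm_eq_abs, abs_of_pos (by norm_num : (0:ℝ) < 2⁻¹)]
          exact mul_le_mul_of_nonneg_left hle (by norm_num)
      _ = eps / 2 := by ring
  · rintro ⟨⟨xc, xb⟩, xc0⟩ ⟨hR, heq⟩ ⟨uc, ub⟩ ⟨xc', xb'⟩ ⟨htc, htb, hext, hR'⟩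
    simp only at heq
    subst heq
    exact ⟨uc, xc', htc, hR', rfl⟩
end

section
/- Let S_a and S_b be metric systems with the same output set, suppose S_b is deterministic, and suppose R ⊆ X_a × X_b is a relation such that R⁻¹ = {(x_b, x_a) : (x_a, x_b) ∈ R} is an ε-approximate simulation relation from S_b to S_a. Then R⁻¹ is an ε-approximate alternating simulation relation from S_b to the deterministic system S_{d(a)} associated with S_a; hence S_b ≼^ε_AS S_{d(a)}. -/
open Sys

universe u v

/-- if `Sb` is deterministic and `R⁻¹` is an ε-approximate simulation
relation from `Sb` to `Sa`, then `R⁻¹` is an ε-approximate alternating simulation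
relation from `Sb` to the deterministic system `S_{d(a)}`; hence `Sb ≼^ε_AS S_{d(a)}`. -/
theorem sim_inv_altSim_detSys
    {Xa Ua Xb Ub Y : Type*} [MetricSpace Y]
    (Sa : Sys Xa Ua Y) (Sb : Sys Xb Ub Y) (hdet : Sb.Deterministic)
    (eps : ℝ) (heps : 0 ≤ eps) (R : Set (Xa × Xb))
    (hSim : ApproxSim Sb Sa eps {p : Xb × Xa | (p.2, p.1) ∈ R}) :
    ApproxAltSim Sb Sa.detSys eps {p : Xb × Xa | (p.2, p.1) ∈ R} := by
  obtain ⟨h1, h2, h3⟩ := hSim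
  refine ⟨h1, h2, ?_⟩
  rintro ⟨xb, xa⟩ hp ub ⟨xb', hxb'⟩
  obtain ⟨ua, xa', htr, hR'⟩ := h3 _ hp ub xb' hxb'
  refine ⟨(ua, xa'), ⟨xa', rfl, htr⟩, ?_⟩
  rintro x' ⟨rfl, _⟩
  exact ⟨xb', hxb', hR'⟩
end

section
/- Let R be an ε-approximate simulation relation from a metric system S_a to a metric system S_b (same output set) such that for every (x_a, x_b) ∈ R, U_a(x_a) = ∅ implies U_b(x_b) = ∅. Then for every (x_a, x_b) ∈ R: (i) every infinite maximal behavior y^a of S_a from x_a is matched by an infinite behavior y^b of S_b from x_b with d(y^a(k), y^b(k)) ≤ ε for all k ∈ ℕ; and (ii) every finite maximal behavior y^a = y^a_0 … y^a_n of S_a from x_a is matched by a finite behavior y^b = y^b_0 … y^b_n of S_b from x_b with d(y^a_k, y^b_k) ≤ ε for all 0 ≤ k ≤ n, realized by a sequence of states of S_b whose final state x_b' satisfies U_b(x_b') = ∅ (so that y^b cannot be extended from that realization). -/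
open Sys

universe u v

/-- if an ε-approximate simulation relation from `Sa` to `Sb` relates
blocking states of `Sa` only to blocking states of `Sb`, then every maximal behavior
of `Sa` is matched, ε-closely and with the same length, by a behavior of `Sb`; finite
maximal behaviors are matched by behaviors realized by a run of `Sb` ending in a
blocking state. -/
theorem maximal_behavior_matching
    {Xa Ua Xb Ub Y : Type*} [MetricSpace Y]
    (Sa : Sys Xa Ua Y) (Sb : Sys Xb Ub Y) (eps : ℝ)
    (R : Set (Xa × Xb)) (hSim : ApproxSim Sa Sb eps R)
    (hBlock : ∀ p ∈ R, Sa.enab p.1 = ∅ → Sb.enab p.2 = ∅) :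
    ∀ xa xb, (xa, xb) ∈ R →
      (∀ ya : ℕ → Y, IsInfBeh Sa xa ya →
        ∃ yb : ℕ → Y, IsInfBeh Sb xb yb ∧ ∀ k, dist (ya k) (yb k) ≤ eps) ∧
      (∀ (n : ℕ) (ya : ℕ → Y), IsMaxFinBeh Sa xa n ya →
        ∃ (yb : ℕ → Y) (xs : ℕ → Xb),
          xs 0 = xb ∧ (∀ i ≤ n, Sb.out (xs i) = yb i) ∧
          (∀ i < n, ∃ u, Sb.tr (xs i) u (xs (i + 1))) ∧
          Sb.enab (xs n) = ∅ ∧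
          ∀ k ≤ n, dist (ya k) (yb k) ≤ eps) := by
  classical
  intro xa xb hxab
  obtain ⟨-, hsim2, hsim3⟩ := hSim
  set g : Xa → Xb → Xa → Xb := fun xA xB xA' =>
    if h : ∃ xb', (xA', xb') ∈ R ∧ ∃ ub, Sb.tr xB ub xb' then h.choose else xB with hg
  have hgspec : ∀ xA xB xA', (xA, xB) ∈ R → (∃ ua, Sa.tr xA ua xA') →
      (xA', g xA xB xA') ∈ R ∧ ∃ ub, Sb.tr xB ub (g xA xB xA') := by
    rintro xA xB xA' hR ⟨ua, htr⟩
    have hex : ∃ xb', (xA', xb') ∈ R ∧ ∃ ub, Sb.tr xB ub xb' := by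
      obtain ⟨ub, xb', htrb, hrel⟩ := hsim3 (xA, xB) hR ua xA' htr
      exact ⟨xb', hrel, ub, htrb⟩
    simp only [hg, dif_pos hex]
    exact ⟨hex.choose_spec.1, hex.choose_spec.2⟩
  constructor
  · rintro ya ⟨xs, hxs0, hout, htr⟩
    set ys : ℕ → Xb := fun i => Nat.rec xb (fun i b => g (xs i) b (xs (i+1))) i with hys
    have hrel : ∀ i, (xs i, ys i) ∈ R := by
      intro i; induction i with
      | zero => simpa [hys, hxs0] using hxab
      | succ i ih => exact (hgspec (xs i) (ys i) (xs (i+1)) ih (htr i)).1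
    refine ⟨fun k => Sb.out (ys k),
      ⟨ys, rfl, fun i => rfl, fun i => (hgspec _ _ _ (hrel i) (htr i)).2⟩, ?_⟩
    intro k
    simpa [hout k] using hsim2 (xs k, ys k) (hrel k)
  · rintro n ya ⟨⟨xs, hxs0, hout, htr⟩, hmaxfin, -⟩
    have henab : Sa.enab (xs n) = ∅ := by
      by_contra h
      obtain ⟨u, hu⟩ := Set.nonempty_iff_ne_empty.mpr h
      obtain ⟨x', hx'⟩ := hu
      apply hmaxfin
      refine ⟨n+1, Nat.lt_succ_self n, fun i => if i ≤ n then ya i else Sa.out x',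
        ⟨fun i => if i ≤ n then xs i else x', ?_, ?_, ?_⟩, ?_⟩
      · simp [hxs0]
      · intro i hi
        by_cases hin : i ≤ n
        · simp [hin, hout i hin]
        · simp [hin]
      · intro i hi
        by_cases hin : i < n
        · have h1 : i ≤ n := hin.le
          have h2 : i + 1 ≤ n := hin
          simp only [if_pos h1, if_pos h2]
          exact htr i hin
        · have hieq : i = n := Nat.le_antisymm (Nat.lt_succ_iff.mp hi) (Nat.le_of_not_lt hin)
          subst hieq
          simp only [le_refl, if_pos, if_neg (Nat.not_succ_le_self i)]
          exact ⟨u, hx'⟩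
      · intro i hi; simp [hi]
    set ys : ℕ → Xb := fun i => Nat.rec xb (fun i b => g (xs i) b (xs (i+1))) i with hys
    have hrel : ∀ i ≤ n, (xs i, ys i) ∈ R := by
      intro i
      induction i with
      | zero => intro _; simpa [hys, hxs0] using hxab
      | succ i ih =>
        intro hi
        have hi' : i ≤ n := Nat.le_of_succ_le hi
        exact (hgspec _ _ _ (ih hi') (htr i (Nat.lt_of_succ_le hi))).1
    refine ⟨fun k => Sb.out (ys k), ys, rfl, fun i _ => rfl,
      fun i hi => (hgspec _ _ _ (hrel i hi.le) (htr i hi)).2, ?_, ?_⟩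
    · exact hBlock (xs n, ys n) (hrel n le_rfl) henab
    · intro k hk
      simpa [hout k hk] using hsim2 (xs k, ys k) (hrel k hk)
end
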